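/- Consider the tripartite scenario where parties A_1, A_2, A_3 have binary inputs x_1, x_2, x_3 ∈ {0,1}, party A_1 has a single fixed output, and parties A_2, A_3 have binary outputs a_2, a_3 ∈ {0,1}. The correlation P(a_2,a_3|x_1,x_2,x_3) = δ_{x_1,0}·δ_{a_2,0}·δ_{a_3,x_2} + δ_{x_1,1}·δ_{a_2,x_3}·δ_{a_3,0} (where δ is the Kronecker delta) is a causal tripartite correlation, but it admits no decomposition of the form P(a|x) = Σ_{k=1}^3 q_k · P_k(a_{∖k}|x_{∖k}) · P_{k,x_{∖k},a_{∖k}}(a_k|x_k) with q_k ≥ 0 summing to 1, causal bipartite correlations P_k, and single-party distributions P_{k,x_{∖k},a_{∖k}} (i.e., no decomposition in which some party always acts last). -/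

import Mathlib

/-- A correlation for the parties in the finite set `S`, where party `i` has input set `X i`
and output set `A i`: a real number `P x a` for each assignment of inputs `x` and outputs `a`
for the parties in `S`. -/
def Corr {ι : Type} (X A : ι → Type) (S : Finset ι) : Type :=
  ((i : {j // j ∈ S}) → X i.1) → ((i : {j // j ∈ S}) → A i.1) → ℝ

/-- `p` is a probability distribution on the finite type `α`. -/
def IsProbDist {α : Type} [Fintype α] (p : α → ℝ) : Prop :=
  (∀ a, 0 ≤ p a) ∧ ∑ a, p a = 1

/-- Restriction of a tuple indexed by `S` to a subset `T ⊆ S`. -/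
def restr {ι : Type} {X : ι → Type} {S T : Finset ι} (h : T ⊆ S)
    (x : (i : {j // j ∈ S}) → X i.1) : (i : {j // j ∈ T}) → X i.1 :=
  fun i => x ⟨i.1, h i.2⟩

theorem erase_sub {ι : Type} [DecidableEq ι] (S : Finset ι) (k : ι) : S.erase k ⊆ S :=
  fun _ hi => Finset.mem_of_mem_erase hi

theorem sdiff_sub {ι : Type} [DecidableEq ι] (S K : Finset ι) : S \ K ⊆ S :=
  fun _ hi => (Finset.mem_sdiff.mp hi).1

/-- Combine a tuple on `K` and a tuple on `S \ K` into a tuple on `S`. -/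
def glue {ι : Type} [DecidableEq ι] {X : ι → Type} {S K : Finset ι} (_ : K ⊆ S)
    (u : (i : {j // j ∈ K}) → X i.1) (v : (i : {j // j ∈ S \ K}) → X i.1) :
    (i : {j // j ∈ S}) → X i.1 :=
  fun i => if h : i.1 ∈ K then u ⟨i.1, h⟩ else v ⟨i.1, Finset.mem_sdiff.mpr ⟨i.2, h⟩⟩

/-- Insert a value for party `k` into a tuple on `S.erase k`, giving a tuple on `S`. -/
def ins {ι : Type} [DecidableEq ι] {X : ι → Type} {S : Finset ι} {k : ι} (_ : k ∈ S)
    (xk : X k) (u : (i : {j // j ∈ S.erase k}) → X i.1) : (i : {j // j ∈ S}) → X i.1 :=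
  fun i => if h : i.1 = k then cast (congrArg X h.symm) xk
    else u ⟨i.1, Finset.mem_erase.mpr ⟨h, i.2⟩⟩

/-- Causal correlations, defined by induction on the number of parties: any single-party
probability distribution is causal; a correlation on a set `S` of at least two parties is
causal iff it is a convex combination, over choices of a party `k ∈ S` acting first, of
products of a single-party distribution for `k` with causal correlations for the remaining
parties `S.erase k` that may depend on the input and output of party `k`. -/
inductive IsCausal {ι : Type} [DecidableEq ι] (X A : ι → Type) [∀ i, Fintype (A i)] :
    (S : Finset ι) → Corr X A S → Prop
  | base (k : ι) (P : Corr X A {k}) (hP : ∀ x, IsProbDist (P x)) : IsCausal X A {k} P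
  | step (S : Finset ι) (hS : 2 ≤ S.card) (P : Corr X A S)
      (q : {j // j ∈ S} → ℝ)
      (Pfirst : (k : {j // j ∈ S}) → X k.1 → A k.1 → ℝ)
      (Prest : (k : {j // j ∈ S}) → X k.1 → A k.1 → Corr X A (S.erase k.1))
      (hq : ∀ k, 0 ≤ q k)
      (hq1 : ∑ k ∈ S.attach, q k = 1)
      (hPfirst : ∀ k xk, IsProbDist (Pfirst k xk))
      (hPrest : ∀ k xk ak, IsCausal X A (S.erase k.1) (Prest k xk ak))
      (hP : ∀ x a, P x a = ∑ k ∈ S.attach, q k * Pfirst k (x k) (a k) *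
            Prest k (x k) (a k) (restr (erase_sub S k.1) x) (restr (erase_sub S k.1) a)) :
      IsCausal X A S P

/-- The output sets for the tripartite scenario of Eq. (7) of the paper: party `A_1` has a
single fixed output (`Unit`), parties `A_2` and `A_3` have binary outputs. -/
def A8 : Fin 3 → Type
  | ⟨0, _⟩ => Unit
  | ⟨1, _⟩ => Bool
  | ⟨_ + 2, _⟩ => Bool

instance A8.instFintype : (i : Fin 3) → Fintype (A8 i)
  | ⟨0, _⟩ => inferInstanceAs (Fintype Unit)
  | ⟨1, _⟩ => inferInstanceAs (Fintype Bool)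
  | ⟨_ + 2, _⟩ => inferInstanceAs (Fintype Bool)

instance A8.instDecidableEq : (i : Fin 3) → DecidableEq (A8 i)
  | ⟨0, _⟩ => inferInstanceAs (DecidableEq Unit)
  | ⟨1, _⟩ => inferInstanceAs (DecidableEq Bool)
  | ⟨_ + 2, _⟩ => inferInstanceAs (DecidableEq Bool)

/-- The correlation of Eq. (7): with inputs `x_1, x_2, x_3` and outputs `a_2, a_3` (party 1
has no output), `P(a_2, a_3 | x_1, x_2, x_3) = δ_{x_1,0} δ_{a_2,0} δ_{a_3,x_2}
+ δ_{x_1,1} δ_{a_2,x_3} δ_{a_3,0}`, encoding `0` as `false` and `1` as `true`. -/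
def P8 : Corr (fun _ : Fin 3 => Bool) A8 Finset.univ := fun x a =>
  if x ⟨0, Finset.mem_univ 0⟩ = false then
    (@ite _ (a ⟨1, Finset.mem_univ 1⟩ = false ∧ a ⟨2, Finset.mem_univ 2⟩ = x ⟨1, Finset.mem_univ 1⟩)
      (@instDecidableAnd _ _ (A8.instDecidableEq _ _ _) (A8.instDecidableEq _ _ _))
      1 0)
  else
    (@ite _ (a ⟨1, Finset.mem_univ 1⟩ = x ⟨2, Finset.mem_univ 2⟩ ∧ a ⟨2, Finset.mem_univ 2⟩ = false)
      (@instDecidableAnd _ _ (A8.instDecidableEq _ _ _) (A8.instDecidableEq _ _ _))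
      1 0)


/-! Parties `A_1, A_2, A_3` are `0, 1, 2 : Fin 3`. The correlation is causal because `A_1` can
always act first: then, for `x₁ = 0`, `A_2` outputs `0` and `A_3` outputs `x₂`, while for
`x₁ = 1`, `A_3` outputs `0` and `A_2` outputs `x₃`.

In a decomposition where party `k` acts last, the term of `k` is a correlation of the other
parties that ignores `x_k`, times a distribution of `a_k`. If, whatever the other outputs, some
choice of `x_k` makes them impossible, the weight of `k` must vanish. For `A_2` this happens
with `x₁ = 0` (`A_3` outputs `x₂`), and for `A_3` with `x₁ = 1` (`A_2` outputs `x₃`). So `A_1`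
always acts last, and the outputs of `A_2, A_3` could not depend on `x₁`; but they do. -/

section Tuples

variable {ι : Type} [DecidableEq ι] {X : ι → Type} {S : Finset ι} {k : ι}

theorem ins_self (hk : k ∈ S) (xk : X k) (u : (i : {j // j ∈ S.erase k}) → X i.1) :
    ins hk xk u ⟨k, hk⟩ = xk :=
  dif_pos rfl

theorem restr_ins (hk : k ∈ S) (xk : X k) (u : (i : {j // j ∈ S.erase k}) → X i.1) :
    restr (erase_sub S k) (ins hk xk u) = u :=
  funext fun i => dif_neg (Finset.mem_erase.mp i.2).1

theorem ins_restr (hk : k ∈ S) (x : (i : {j // j ∈ S}) → X i.1) :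
    ins hk (x ⟨k, hk⟩) (restr (erase_sub S k) x) = x := by
  funext ⟨i, hi⟩
  by_cases h : i = k
  · subst h
    exact ins_self hk _ _
  · exact dif_neg h

def insEquiv (hk : k ∈ S) :
    (X k × ((i : {j // j ∈ S.erase k}) → X i.1)) ≃ ((i : {j // j ∈ S}) → X i.1) where
  toFun p := ins hk p.1 p.2
  invFun x := (x ⟨k, hk⟩, restr (erase_sub S k) x)
  left_inv p := Prod.ext (ins_self hk p.1 p.2) (restr_ins hk p.1 p.2)
  right_inv := ins_restr hk

theorem sum_split_at [∀ i, Fintype (X i)] (hk : k ∈ S)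
    (f : X k → ((i : {j // j ∈ S.erase k}) → X i.1) → ℝ) :
    ∑ x, f (x ⟨k, hk⟩) (restr (erase_sub S k) x) = ∑ xk, ∑ u, f xk u := by
  rw [← Fintype.sum_prod_type']
  exact Fintype.sum_equiv (insEquiv hk).symm _ _ fun _ => rfl

end Tuples

theorem IsProbDist.comp_equiv {α β : Type} [Fintype α] [Fintype β] {p : α → ℝ}
    (hp : IsProbDist p) (e : β ≃ α) : IsProbDist (p ∘ e) :=
  ⟨fun b => hp.1 (e b), (e.sum_comp p).trans hp.2⟩

theorem exists_isProbDist (α : Type) [Fintype α] [Nonempty α] : ∃ p : α → ℝ, IsProbDist p :=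
  ⟨fun _ => (Fintype.card α : ℝ)⁻¹, fun _ => by positivity, by simp⟩

theorem isProbDist_ite_eq {α : Type} [Fintype α] [DecidableEq α] (c : α) :
    IsProbDist fun a => if a = c then (1 : ℝ) else 0 :=
  ⟨fun a => by positivity, by simp⟩

theorem ite_and_eq_mul {R : Type*} [MulZeroOneClass R] (p q : Prop) [Decidable p] [Decidable q] :
    (if p ∧ q then (1 : R) else 0) = (if p then 1 else 0) * (if q then 1 else 0) := by
  rw [ite_zero_mul_ite_zero, one_mul]

section Causal

variable {ι : Type} [DecidableEq ι] {X A : ι → Type} [∀ i, Fintype (A i)]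

theorem IsCausal.isProbDist {S : Finset ι} {P : Corr X A S} (h : IsCausal X A S P) (x) :
    IsProbDist (P x) := by
  induction h with
  | base k P hP => exact hP x
  | step S hS P q Pfirst Prest hq hq1 hPfirst hPrest hP ih =>
    refine ⟨fun a => ?_, ?_⟩
    · rw [hP]
      exact Finset.sum_nonneg fun j _ => mul_nonneg (mul_nonneg (hq j)
        ((hPfirst j (x j)).1 _)) ((ih j _ _ _).1 _)
    · simp_rw [hP, ← hq1]
      rw [Finset.sum_comm]
      refine Finset.sum_congr rfl fun j _ => ?_
      simp_rw [mul_assoc, ← Finset.mul_sum]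
      rw [sum_split_at (X := A) j.2 fun aj u => Pfirst j (x j) aj * Prest j (x j) aj _ u]
      simp_rw [← Finset.mul_sum, (ih j _ _ _).2, mul_one, (hPfirst j (x j)).2, mul_one]

theorem isCausal_of_eq_singleton {T : Finset ι} {m : ι} (hT : T = {m})
    (p : X m → A m → ℝ) (hp : ∀ xm, IsProbDist (p xm)) :
    IsCausal X A T fun x a => p (x ⟨m, by simp [hT]⟩) (a ⟨m, by simp [hT]⟩) := by
  subst hT
  exact IsCausal.base m _ fun x =>
    (hp _).comp_equiv (Equiv.piUnique fun i : {j // j ∈ ({m} : Finset ι)} => A i.1)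

variable [∀ i, Nonempty (A i)]

theorem exists_isCausal (T : Finset ι) (hT : T.Nonempty) : ∃ P, IsCausal X A T P := by
  induction T using Finset.strongInduction with
  | H T ih =>
  obtain ⟨m, hm⟩ | hT := hT.exists_eq_singleton_or_nontrivial
  · obtain ⟨p, hp⟩ := exists_isProbDist (A m)
    exact ⟨_, isCausal_of_eq_singleton (X := X) hm (fun _ => p) fun _ => hp⟩
  · choose p hp using fun i => exists_isProbDist (A i)
    choose R hR using fun j : {j // j ∈ T} =>
      ih (T.erase j.1) (Finset.erase_ssubset j.2) hT.erase_nonempty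
    exact ⟨_, .step T (Finset.one_lt_card_iff_nontrivial.mpr hT) _ (fun _ => (T.card : ℝ)⁻¹)
      (fun j _ => p j.1) (fun j _ _ => R j) (fun _ => by positivity)
      (by simp [hT.nonempty.card_ne_zero]) (fun j _ => hp j.1) (fun j _ _ => hR j)
      fun _ _ => rfl⟩

theorem IsCausal.of_first {S : Finset ι} (hS : 2 ≤ S.card) {k : ι} (hk : k ∈ S)
    (p : X k → A k → ℝ) (hp : ∀ xk, IsProbDist (p xk))
    (R : X k → A k → Corr X A (S.erase k)) (hR : ∀ xk ak, IsCausal X A (S.erase k) (R xk ak)) :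
    IsCausal X A S fun x a => p (x ⟨k, hk⟩) (a ⟨k, hk⟩) *
      R (x ⟨k, hk⟩) (a ⟨k, hk⟩) (restr (erase_sub S k) x) (restr (erase_sub S k) a) := by
  -- the other parties get weight `0`, so any distributions and causal correlations will do
  choose u hu using fun i => exists_isProbDist (A i)
  choose Q hQ using fun j : {j // j ∈ S} => exists_isCausal (X := X) (A := A) (S.erase j.1)
    (Finset.one_lt_card_iff_nontrivial.mp hS).erase_nonempty
  refine .step S hS _ (Pi.single ⟨k, hk⟩ 1)
    (Function.update (fun j _ => u j.1) ⟨k, hk⟩ p)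
    (Function.update (fun j _ _ => Q j) ⟨k, hk⟩ R) (fun j => ?_) (by simp) (fun j => ?_)
    (fun j => ?_) fun x a => ?_
  · by_cases h : j = ⟨k, hk⟩ <;> simp [h]
  · by_cases h : j = ⟨k, hk⟩
    · subst h
      simpa using hp
    · simpa [h] using fun _ => hu j.1
  · by_cases h : j = ⟨k, hk⟩
    · subst h
      simpa using hR
    · intro _ _
      simpa [h] using hQ j
  · rw [Finset.sum_eq_single_of_mem _ (Finset.mem_attach _ _) fun j _ h => by
      rw [Pi.single_eq_of_ne h, zero_mul, zero_mul]]
    simp only [Pi.single_eq_same, Function.update_self, one_mul]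

end Causal

section LastParty

variable {ι : Type} [DecidableEq ι] {X A : ι → Type} {S : Finset ι}

/-- The summand of party `j` in a decomposition of the form (5) of the paper, where `j` acts
last. -/
def lastPartyTerm (q : {j // j ∈ S} → ℝ) (PN : (j : {j // j ∈ S}) → Corr X A (S.erase j.1))
    (Plast : (j : {j // j ∈ S}) → ((i : {i // i ∈ S.erase j.1}) → X i.1) →
      ((i : {i // i ∈ S.erase j.1}) → A i.1) → X j.1 → A j.1 → ℝ)
    (j : {j // j ∈ S}) (x : (i : {i // i ∈ S}) → X i.1) (a : (i : {i // i ∈ S}) → A i.1) : ℝ :=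
  q j * PN j (restr (erase_sub S j.1) x) (restr (erase_sub S j.1) a) *
    Plast j (restr (erase_sub S j.1) x) (restr (erase_sub S j.1) a) (x j) (a j)

variable {q : {j // j ∈ S} → ℝ} {PN : (j : {j // j ∈ S}) → Corr X A (S.erase j.1)}
  {Plast : (j : {j // j ∈ S}) → ((i : {i // i ∈ S.erase j.1}) → X i.1) →
    ((i : {i // i ∈ S.erase j.1}) → A i.1) → X j.1 → A j.1 → ℝ}

theorem lastPartyTerm_ins {k : ι} (hk : k ∈ S) (xk : X k) (ak : A k)
    (y : (i : {i // i ∈ S.erase k}) → X i.1) (b : (i : {i // i ∈ S.erase k}) → A i.1) :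
    lastPartyTerm q PN Plast ⟨k, hk⟩ (ins hk xk y) (ins hk ak b) =
      q ⟨k, hk⟩ * PN ⟨k, hk⟩ y b * Plast ⟨k, hk⟩ y b xk ak := by
  simp only [lastPartyTerm, restr_ins, ins_self]

variable [∀ i, Fintype (A i)]

variable (X A) in
def HasLastPartyForm (S : Finset ι) (P : Corr X A S) : Prop :=
  ∃ (q : {j // j ∈ S} → ℝ) (PN : (j : {j // j ∈ S}) → Corr X A (S.erase j.1))
    (Plast : (j : {j // j ∈ S}) → ((i : {i // i ∈ S.erase j.1}) → X i.1) →
      ((i : {i // i ∈ S.erase j.1}) → A i.1) → X j.1 → A j.1 → ℝ),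
    (∀ j, 0 ≤ q j) ∧ (∑ j ∈ S.attach, q j = 1) ∧
    (∀ j, IsCausal X A (S.erase j.1) (PN j)) ∧ (∀ j y b xj, IsProbDist (Plast j y b xj)) ∧
    ∀ x a, P x a = ∑ j ∈ S.attach, lastPartyTerm q PN Plast j x a

variable {P : Corr X A S}

theorem lastPartyTerm_nonneg (hq : ∀ j, 0 ≤ q j) (hPN : ∀ j y, IsProbDist (PN j y))
    (hPlast : ∀ j y b xj, IsProbDist (Plast j y b xj)) (j x a) :
    0 ≤ lastPartyTerm q PN Plast j x a :=
  mul_nonneg (mul_nonneg (hq j) ((hPN j _).1 _)) ((hPlast j _ _ _).1 _)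

theorem lastParty_weight_eq_zero (hq : ∀ j, 0 ≤ q j) (hPN : ∀ j y, IsProbDist (PN j y))
    (hPlast : ∀ j y b xj, IsProbDist (Plast j y b xj))
    (hP : ∀ x a, P x a = ∑ j ∈ S.attach, lastPartyTerm q PN Plast j x a)
    {k : ι} (hk : k ∈ S) (y : (i : {i // i ∈ S.erase k}) → X i.1)
    (hforce : ∀ b, ∃ xk, ∀ ak, P (ins hk xk y) (ins hk ak b) = 0) : q ⟨k, hk⟩ = 0 := by
  have hzero : ∀ b, q ⟨k, hk⟩ * PN ⟨k, hk⟩ y b = 0 := by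
    intro b
    obtain ⟨xk, hxk⟩ := hforce b
    have hterm : ∀ ak, q ⟨k, hk⟩ * PN ⟨k, hk⟩ y b * Plast ⟨k, hk⟩ y b xk ak = 0 := by
      intro ak
      rw [← lastPartyTerm_ins]
      refine le_antisymm ?_ (lastPartyTerm_nonneg hq hPN hPlast _ _ _)
      rw [← hxk ak, hP]
      exact Finset.single_le_sum (fun j _ => lastPartyTerm_nonneg hq hPN hPlast j _ _)
        (Finset.mem_attach _ _)
    calc q ⟨k, hk⟩ * PN ⟨k, hk⟩ y b
        = ∑ ak, q ⟨k, hk⟩ * PN ⟨k, hk⟩ y b * Plast ⟨k, hk⟩ y b xk ak := by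
          rw [← Finset.mul_sum, (hPlast ⟨k, hk⟩ y b xk).2, mul_one]
      _ = 0 := Finset.sum_eq_zero fun ak _ => hterm ak
  calc q ⟨k, hk⟩ = ∑ b, q ⟨k, hk⟩ * PN ⟨k, hk⟩ y b := by
        rw [← Finset.mul_sum, (hPN ⟨k, hk⟩ y).2, mul_one]
    _ = 0 := Finset.sum_eq_zero fun b _ => hzero b

theorem lastParty_marginal_eq (hPlast : ∀ j y b xj, IsProbDist (Plast j y b xj))
    (hP : ∀ x a, P x a = ∑ j ∈ S.attach, lastPartyTerm q PN Plast j x a)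
    {k : ι} (hk : k ∈ S) (hq : ∀ j, j ≠ ⟨k, hk⟩ → q j = 0) (xk : X k)
    (y : (i : {i // i ∈ S.erase k}) → X i.1) (b : (i : {i // i ∈ S.erase k}) → A i.1) :
    ∑ ak, P (ins hk xk y) (ins hk ak b) = q ⟨k, hk⟩ * PN ⟨k, hk⟩ y b := by
  simp_rw [hP]
  rw [← mul_one (_ * _), ← (hPlast ⟨k, hk⟩ y b xk).2, Finset.mul_sum]
  refine Finset.sum_congr rfl fun ak _ => ?_
  rw [Finset.sum_eq_single_of_mem _ (Finset.mem_attach _ _) fun j _ h => by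
    simp only [lastPartyTerm, hq j h, zero_mul], lastPartyTerm_ins]

end LastParty

instance A8.instNonempty : (i : Fin 3) → Nonempty (A8 i)
  | ⟨0, _⟩ => ⟨()⟩
  | ⟨1, _⟩ => ⟨false⟩
  | ⟨_ + 2, _⟩ => ⟨false⟩

-- `if b ⟨1, _⟩ = false then 1 else 0` finds no `Decidable` instance at the type `A8 ↑⟨1, _⟩`;
-- stating the test at the uniform type `A8 i` avoids this.
def A8.delta (i : Fin 3) (c a : A8 i) : ℝ := if a = c then 1 else 0

def A8.tuple (a₂ a₃ : Bool) : (i : Fin 3) → A8 i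
  | ⟨0, _⟩ => ()
  | ⟨1, _⟩ => a₂
  | ⟨_ + 2, _⟩ => a₃

/-- The correlation of `A_2, A_3` once `A_1`, with input `x₁`, has acted. -/
def afterA1 : Bool → Corr (fun _ : Fin 3 => Bool) A8 (Finset.univ.erase 0)
  | false => fun y b =>
      A8.delta 1 false (b ⟨1, by decide⟩) * A8.delta 2 (y ⟨1, by decide⟩) (b ⟨2, by decide⟩)
  | true => fun y b =>
      A8.delta 2 false (b ⟨2, by decide⟩) * A8.delta 1 (y ⟨2, by decide⟩) (b ⟨1, by decide⟩)

theorem isCausal_afterA1 (x₁ : Bool) :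
    IsCausal (fun _ : Fin 3 => Bool) A8 (Finset.univ.erase 0) (afterA1 x₁) := by
  cases x₁
  · exact IsCausal.of_first (X := fun _ : Fin 3 => Bool) (A := A8) (k := 1) (by decide)
      (by decide) (fun _ => A8.delta 1 false) (fun _ => isProbDist_ite_eq _)
      (fun x₂ _ _ b => A8.delta 2 x₂ (b ⟨2, by decide⟩)) fun x₂ _ =>
        isCausal_of_eq_singleton (by decide) (fun _ => A8.delta 2 x₂) fun _ => isProbDist_ite_eq _
  · exact IsCausal.of_first (X := fun _ : Fin 3 => Bool) (A := A8) (k := 2) (by decide)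
      (by decide) (fun _ => A8.delta 2 false) (fun _ => isProbDist_ite_eq _)
      (fun x₃ _ _ b => A8.delta 1 x₃ (b ⟨1, by decide⟩)) fun x₃ _ =>
        isCausal_of_eq_singleton (by decide) (fun _ => A8.delta 1 x₃) fun _ => isProbDist_ite_eq _

theorem P8_eq_afterA1 (x : (i : {j // j ∈ (Finset.univ : Finset (Fin 3))}) → Bool)
    (a : (i : {j // j ∈ (Finset.univ : Finset (Fin 3))}) → A8 i.1) :
    P8 x a = afterA1 (x ⟨0, Finset.mem_univ 0⟩)
      (restr (X := fun _ : Fin 3 => Bool) (erase_sub Finset.univ 0) x)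
      (restr (erase_sub Finset.univ 0) a) := by
  cases h : x ⟨0, Finset.mem_univ 0⟩
  · simp only [P8, h, if_true]
    exact @ite_and_eq_mul ℝ _ _ _ (A8.instDecidableEq _ _ _) (A8.instDecidableEq _ _ _)
  · simp only [P8, h, Bool.true_eq_false, if_false]
    exact (@ite_and_eq_mul ℝ _ _ _ (A8.instDecidableEq _ _ _) (A8.instDecidableEq _ _ _)).trans
      (mul_comm _ _)

theorem isCausal_P8 : IsCausal (fun _ : Fin 3 => Bool) A8 Finset.univ P8 := by
  have h := IsCausal.of_first (k := 0) (by decide) (Finset.mem_univ 0)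
    (fun _ _ => 1) (fun _ => isProbDist_ite_eq (() : A8 0))
    (fun x₁ _ => afterA1 x₁) (fun x₁ _ => isCausal_afterA1 x₁)
  simp only [one_mul, ← P8_eq_afterA1] at h
  exact h

theorem not_hasLastPartyForm_P8 :
    ¬ HasLastPartyForm (fun _ : Fin 3 => Bool) A8 Finset.univ P8 := by
  rintro ⟨q, PN, Plast, hq, -, hPN, hPlast, hP⟩
  have hPN' : ∀ j y, IsProbDist (PN j y) := fun j => (hPN j).isProbDist
  have hq₂ : q ⟨1, Finset.mem_univ 1⟩ = 0 := by
    refine lastParty_weight_eq_zero (X := fun _ : Fin 3 => Bool) hq hPN' hPlast hP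
      (Finset.mem_univ 1) (fun _ => false) fun b => ⟨!b ⟨2, by decide⟩, fun a₂ => ?_⟩
    unfold P8 ins
    simpa using fun _ h => Bool.not_ne_self _ h.symm
  have hq₃ : q ⟨2, Finset.mem_univ 2⟩ = 0 := by
    refine lastParty_weight_eq_zero (X := fun _ : Fin 3 => Bool) hq hPN' hPlast hP
      (Finset.mem_univ 2) (fun i => decide (i.1 = 0)) fun b => ⟨!b ⟨1, by decide⟩, fun a₃ => ?_⟩
    unfold P8 ins
    simpa using fun h _ => Bool.not_ne_self _ h.symm
  have hmarginal := lastParty_marginal_eq (X := fun _ : Fin 3 => Bool) hPlast hP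
    (Finset.mem_univ 0) (by rintro ⟨j, -⟩; fin_cases j <;> simp_all)
    (y := fun i => decide (i.1 = 1)) (b := fun i => A8.tuple false true i.1)
  have h₀ : ∀ a₁, P8 (ins (X := fun _ : Fin 3 => Bool) (Finset.mem_univ 0) false
      fun i => decide (i.1 = 1)) (ins (Finset.mem_univ 0) a₁ fun i => A8.tuple false true i.1) = 1 :=
    fun _ => rfl
  have h₁ : ∀ a₁, P8 (ins (X := fun _ : Fin 3 => Bool) (Finset.mem_univ 0) true
      fun i => decide (i.1 = 1)) (ins (Finset.mem_univ 0) a₁ fun i => A8.tuple false true i.1) = 0 :=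
    fun _ => rfl
  have := (hmarginal false).trans (hmarginal true).symm
  simp [h₀, h₁] at this

/-- the dynamical-order correlation of Eq. (7) is causal, but admits no
decomposition of the form (5) in which some party always acts last. -/
theorem dynamical_example_causal_but_no_party_last_form :
    IsCausal (fun _ : Fin 3 => Bool) A8 Finset.univ P8 ∧
    ¬ ∃ (q : {j // j ∈ (Finset.univ : Finset (Fin 3))} → ℝ)
        (PNk : (k : {j // j ∈ (Finset.univ : Finset (Fin 3))}) →
          Corr (fun _ : Fin 3 => Bool) A8 (Finset.univ.erase k.1))
        (Plast : (k : {j // j ∈ (Finset.univ : Finset (Fin 3))}) →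
          ((i : {j // j ∈ Finset.univ.erase k.1}) → Bool) →
          ((i : {j // j ∈ Finset.univ.erase k.1}) → A8 i.1) → Bool → A8 k.1 → ℝ),
        (∀ k, 0 ≤ q k) ∧ (∑ k ∈ Finset.univ.attach, q k = 1) ∧
        (∀ k, IsCausal (fun _ : Fin 3 => Bool) A8 (Finset.univ.erase k.1) (PNk k)) ∧
        (∀ k u b xk, IsProbDist (Plast k u b xk)) ∧
        (∀ x a, P8 x a = ∑ k ∈ Finset.univ.attach, q k *
            PNk k (restr (X := fun _ : Fin 3 => Bool) (erase_sub Finset.univ k.1) x)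
              (restr (erase_sub Finset.univ k.1) a) *
            Plast k (restr (X := fun _ : Fin 3 => Bool) (erase_sub Finset.univ k.1) x)
              (restr (erase_sub Finset.univ k.1) a) (x k) (a k)) :=
  ⟨isCausal_P8, not_hasLastPartyForm_P8⟩
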